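/- arXiv:1608.04079 — 5 statements merged into one kernel-verified Lean document; each statement's English description precedes it below -/
import Mathlib

section
/- If C(A,a) contains an invertible matrix, then dim C(A,a) = dim C(A,1), i.e., the twisted centralizer has the same dimension as the ordinary centralizer of A. -/
/-- If the twisted centralizer `C(A,a)` contains an invertible matrix, then it has the
same dimension as the ordinary centralizer `C(A,1)`. -/
theorem stmt_6 {F : Type*} [Field F] {n : ℕ} (A : Matrix (Fin n) (Fin n) F) (a : F)
    (h : ∃ B : Matrix (Fin n) (Fin n) F, IsUnit B ∧ A * B = a • (B * A)) :
    Module.finrank F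
        ↥(LinearMap.ker (LinearMap.mulLeft F A - a • LinearMap.mulRight F A)) =
      Module.finrank F
        ↥(LinearMap.ker (LinearMap.mulLeft F A - LinearMap.mulRight F A)) := by
  obtain ⟨B, hB, hAB⟩ := h
  obtain ⟨U, rfl⟩ := hB
  set B : Matrix (Fin n) (Fin n) F := (↑U : Matrix (Fin n) (Fin n) F) with hBdef
  set V : Matrix (Fin n) (Fin n) F := (↑U⁻¹ : Matrix (Fin n) (Fin n) F) with hVdef
  have hVB : V * B = 1 := U.inv_mul
  have hBV : B * V = 1 := U.mul_inv
  have key : V * A = a • (A * V) := by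
    have h2 : V * (A * B) * V = V * (a • (B * A)) * V := by rw [hAB]
    calc V * A = V * A * (B * V) := by rw [hBV, mul_one]
      _ = V * (A * B) * V := by noncomm_ring
      _ = V * (a • (B * A)) * V := h2
      _ = a • ((V * B) * (A * V)) := by
          simp only [Matrix.mul_smul, Matrix.smul_mul, mul_assoc]
      _ = a • (A * V) := by rw [hVB, one_mul]
  set e : Matrix (Fin n) (Fin n) F ≃ₗ[F] Matrix (Fin n) (Fin n) F :=
    LinearEquiv.ofLinear (LinearMap.mulRight F B) (LinearMap.mulRight F V)
      (by ext C; simp [mul_assoc, hVB])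
      (by ext C; simp [mul_assoc, hBV]) with he
  have hker : LinearMap.ker (LinearMap.mulLeft F A - a • LinearMap.mulRight F A) =
      Submodule.map (e : Matrix (Fin n) (Fin n) F →ₗ[F] Matrix (Fin n) (Fin n) F)
        (LinearMap.ker (LinearMap.mulLeft F A - LinearMap.mulRight F A)) := by
    ext D
    simp only [LinearMap.mem_ker, Submodule.mem_map, LinearMap.sub_apply,
      LinearMap.mulLeft_apply, LinearMap.mulRight_apply, LinearMap.smul_apply,
      sub_eq_zero, he, LinearEquiv.coe_coe, LinearEquiv.ofLinear_apply]
    constructor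
    · intro hD
      refine ⟨D * V, ?_, ?_⟩
      · calc A * (D * V) = (A * D) * V := by rw [mul_assoc]
          _ = (a • (D * A)) * V := by rw [hD]
          _ = D * (a • (A * V)) := by
              simp only [Matrix.smul_mul, Matrix.mul_smul, mul_assoc]
          _ = D * (V * A) := by rw [key]
          _ = D * V * A := by rw [mul_assoc]
      · simp [LinearMap.mulRight_apply, mul_assoc, hVB]
    · rintro ⟨C, hC, rfl⟩
      calc A * (C * B) = (A * C) * B := by rw [mul_assoc]
        _ = (C * A) * B := by rw [hC]
        _ = C * (A * B) := by rw [mul_assoc]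
        _ = C * (a • (B * A)) := by rw [hAB]
        _ = a • (C * B * A) := by simp only [Matrix.mul_smul, mul_assoc]
  rw [hker, LinearEquiv.finrank_map_eq]
end

section
/- For any a, dim C(A,a) ≥ (dim Ker A)², where Ker A is the null space of A. -/
lemma toLin'_eq_mulVecLin' {F : Type*} [Field F] {n : ℕ} (A : Matrix (Fin n) (Fin n) F) :
    Matrix.toLin' A = A.mulVecLin := by
  ext v i; simp [Matrix.toLin'_apply, Matrix.mulVecLin_apply]

/-- `dim C(A,a) ≥ (dim Ker A)²`. -/
theorem stmt_8 {F : Type*} [Field F] {n : ℕ} (A : Matrix (Fin n) (Fin n) F) (a : F) :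
    (Module.finrank F ↥(LinearMap.ker A.mulVecLin)) ^ 2 ≤
      Module.finrank F
        ↥(LinearMap.ker (LinearMap.mulLeft F A - a • LinearMap.mulRight F A)) := by
  classical
  set K := LinearMap.ker A.mulVecLin with hK
  set R := LinearMap.range A.mulVecLin with hR
  have hdim : Module.finrank F ((Fin n → F) ⧸ R) = Module.finrank F K := by
    have h1 := Submodule.finrank_quotient_add_finrank R
    have h2 : Module.finrank F R + Module.finrank F K = Module.finrank F (Fin n → F) :=
      LinearMap.finrank_range_add_finrank_ker A.mulVecLin
    omega
  have hAM : LinearMap.toMatrix' A.mulVecLin = A := by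
    rw [← toLin'_eq_mulVecLin', LinearMap.toMatrix'_toLin']
  set S := LinearMap.ker (LinearMap.mulLeft F A - a • LinearMap.mulRight F A) with hS
  set Φ : (((Fin n → F) ⧸ R) →ₗ[F] K) →ₗ[F] Matrix (Fin n) (Fin n) F :=
    (LinearMap.toMatrix' : ((Fin n → F) →ₗ[F] (Fin n → F)) ≃ₗ[F]
        Matrix (Fin n) (Fin n) F).toLinearMap ∘ₗ
      (LinearMap.lcomp F (Fin n → F) R.mkQ) ∘ₗ
      (LinearMap.llcomp F ((Fin n → F) ⧸ R) K (Fin n → F) K.subtype) with hΦ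
  have hΦapp : ∀ f, Φ f = LinearMap.toMatrix' (K.subtype ∘ₗ f ∘ₗ R.mkQ) := by
    intro f
    simp only [hΦ, LinearMap.coe_comp, Function.comp_apply, LinearEquiv.coe_coe,
      LinearMap.lcomp_apply', LinearMap.llcomp_apply]
    rfl
  have hmem : ∀ f, Φ f ∈ S := by
    intro f
    have hL : A.mulVecLin ∘ₗ (K.subtype ∘ₗ f ∘ₗ R.mkQ) = 0 := by
      refine LinearMap.ext fun v => ?_
      simpa using (f (R.mkQ v)).2
    have hR' : (K.subtype ∘ₗ f ∘ₗ R.mkQ) ∘ₗ A.mulVecLin = 0 := by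
      refine LinearMap.ext fun v => ?_
      have h0 : R.mkQ (A.mulVecLin v) = 0 := by
        rw [Submodule.mkQ_apply, Submodule.Quotient.mk_eq_zero]
        exact ⟨v, rfl⟩
      simp only [LinearMap.comp_apply, h0, map_zero, LinearMap.zero_apply,
        ZeroMemClass.coe_zero]
    have h1 : A * Φ f = 0 := by
      rw [hΦapp, ← hAM, ← LinearMap.toMatrix'_comp, hL]
      exact LinearEquiv.map_zero _
    have h2 : Φ f * A = 0 := by
      rw [hΦapp, ← hAM, ← LinearMap.toMatrix'_comp, hR']
      exact LinearEquiv.map_zero _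
    simp [hS, LinearMap.mem_ker, LinearMap.mulLeft_apply, LinearMap.mulRight_apply, h1, h2]
  have hΦinj : Function.Injective Φ := by
    intro f g hfg
    rw [hΦapp, hΦapp] at hfg
    have h := LinearMap.toMatrix'.injective hfg
    refine LinearMap.ext fun x => ?_
    obtain ⟨y, rfl⟩ := R.mkQ_surjective x
    exact Subtype.ext (DFunLike.congr_fun h y)
  have hle : Module.finrank F (((Fin n → F) ⧸ R) →ₗ[F] K) ≤ Module.finrank F S :=
    LinearMap.finrank_le_finrank_of_injective
      (f := Φ.codRestrict S hmem)
      (fun f g h => hΦinj (congrArg Subtype.val h))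
  calc Module.finrank F K ^ 2
      = Module.finrank F ((Fin n → F) ⧸ R) * Module.finrank F K := by rw [hdim, sq]
    _ = Module.finrank F (((Fin n → F) ⧸ R) →ₗ[F] K) := by rw [Module.finrank_linearMap]
    _ ≤ Module.finrank F S := hle
end

section
/- If A = Jₙ + Iₙ over a field F whose characteristic divides n+1 (where Jₙ is the all-ones matrix), and a ≠ 0, 1, then C(A,a) is the one-dimensional span of Jₙ; in particular every nonzero codeword has Hamming weight n², so the code has parameters [n², 1, n²]. -/
/-- If `A = Jₙ + Iₙ` over a field of characteristic `p` dividing `n+1`, and `a ≠ 0,1`,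
then `C(A,a)` is the one-dimensional span of `Jₙ`, and every nonzero codeword has
Hamming weight `n²`. -/
theorem stmt_11 {F : Type*} [Field F] [DecidableEq F] {p n : ℕ} [CharP F p]
    (hp : p ≠ 0) (hpn : p ∣ n + 1) (a : F) (ha0 : a ≠ 0) (ha1 : a ≠ 1) :
    let J : Matrix (Fin n) (Fin n) F := Matrix.of fun _ _ => 1
    let A : Matrix (Fin n) (Fin n) F := J + 1
    {B : Matrix (Fin n) (Fin n) F | A * B = a • (B * A)} =
        ↑(Submodule.span F {J}) ∧
      (∀ B : Matrix (Fin n) (Fin n) F, A * B = a • (B * A) → B ≠ 0 →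
        (Finset.univ.filter fun q : Fin n × Fin n => B q.1 q.2 ≠ 0).card = n ^ 2) := by
  intro J A
  have hn1 : (n : F) + 1 = 0 := by
    have h := (CharP.cast_eq_zero_iff F p (n + 1)).mpr hpn
    push_cast at h
    exact h
  have hnF : (n : F) = -1 := by linear_combination hn1
  -- entrywise multiplication formulas
  have hAB : ∀ (B : Matrix (Fin n) (Fin n) F) i j,
      (A * B) i j = (∑ k, B k j) + B i j := by
    intro B i j
    simp only [A, J, Matrix.mul_apply, Matrix.add_apply, Matrix.one_apply, Matrix.of_apply,
      add_mul, one_mul, ite_mul, zero_mul, Finset.sum_add_distrib,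
      Finset.sum_ite_eq, Finset.mem_univ, if_true]
  have hBA : ∀ (B : Matrix (Fin n) (Fin n) F) i j,
      (B * A) i j = (∑ k, B i k) + B i j := by
    intro B i j
    simp only [A, J, Matrix.mul_apply, Matrix.add_apply, Matrix.one_apply, Matrix.of_apply,
      mul_add, mul_one, mul_ite, mul_zero, Finset.sum_add_distrib,
      Finset.sum_ite_eq', Finset.mem_univ, if_true]
  -- forward: any B in the code is constant
  have key : ∀ B : Matrix (Fin n) (Fin n) F, A * B = a • (B * A) →
      ∀ i j, B i j = ∑ q : Fin n, ∑ r : Fin n, B q r := by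
    intro B hB i j
    set S : F := ∑ q : Fin n, ∑ r : Fin n, B q r with hS
    have h' : ∀ i j, (∑ k, B k j) + B i j = a * ((∑ k, B i k) + B i j) := by
      intro i j
      have := congrFun (congrFun hB i) j
      rw [hAB, Matrix.smul_apply, hBA] at this
      simpa [smul_eq_mul] using this
    -- column sums equal -S
    have hcol : ∀ j, (∑ k, B k j) = -S := by
      intro j
      have hsum : ∑ i, ((∑ k, B k j) + B i j) = ∑ i, a * ((∑ k, B i k) + B i j) := by
        exact Finset.sum_congr rfl fun i _ => h' i j
      have hl : ∑ i : Fin n, ((∑ k, B k j) + B i j)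
          = (n : F) * (∑ k, B k j) + (∑ k, B k j) := by
        rw [Finset.sum_add_distrib, Finset.sum_const, Finset.card_univ, Fintype.card_fin,
          nsmul_eq_mul]
      have hr : ∑ i : Fin n, a * ((∑ k, B i k) + B i j)
          = a * (S + (∑ k, B k j)) := by
        rw [← Finset.mul_sum, Finset.sum_add_distrib]
      rw [hl, hr, hnF] at hsum
      have : a * (S + (∑ k, B k j)) = 0 := by linear_combination -hsum
      have h0 : S + (∑ k, B k j) = 0 := by
        rcases mul_eq_zero.mp this with h | h
        · exact absurd h ha0
        · exact h
      linear_combination h0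
    -- row sums equal -S
    have hrow : ∀ i, (∑ k, B i k) = -S := by
      intro i
      have hsum : ∑ j, ((∑ k, B k j) + B i j) = ∑ j, a * ((∑ k, B i k) + B i j) := by
        exact Finset.sum_congr rfl fun j _ => h' i j
      have hl : ∑ j : Fin n, ((∑ k, B k j) + B i j)
          = S + (∑ k, B i k) := by
        rw [Finset.sum_add_distrib]
        congr 1
        rw [hS, Finset.sum_comm]
      have hr : ∑ j : Fin n, a * ((∑ k, B i k) + B i j)
          = a * ((n : F) * (∑ k, B i k) + (∑ k, B i k)) := by
        rw [← Finset.mul_sum, Finset.sum_add_distrib, Finset.sum_const, Finset.card_univ,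
          Fintype.card_fin, nsmul_eq_mul]
      rw [hl, hr, hnF] at hsum
      have h1 : S + (∑ k, B i k) = a * 0 := by
        rw [hsum]; ring_nf
      have h0 : S + (∑ k, B i k) = 0 := by linear_combination h1
      linear_combination h0
    have := h' i j
    rw [hcol j, hrow i] at this
    -- -S + B i j = a * (-S + B i j)  and a ≠ 1  ⇒  B i j = S
    have hfac : (1 - a) * (B i j - S) = 0 := by linear_combination this
    rcases mul_eq_zero.mp hfac with h | h
    · exact absurd (by linear_combination -h : a = 1) ha1
    · linear_combination h
  -- A * J = 0 and J * A = 0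
  have hAJ : A * J = 0 := by
    ext i j
    rw [hAB]
    simp [J, hnF]
  have hJA : J * A = 0 := by
    ext i j
    rw [hBA]
    simp [J, hnF]
  constructor
  · ext B
    simp only [Set.mem_setOf_eq, SetLike.mem_coe, Submodule.mem_span_singleton]
    constructor
    · intro hB
      refine ⟨∑ q : Fin n, ∑ r : Fin n, B q r, ?_⟩
      ext i j
      simp only [Matrix.smul_apply, J, Matrix.of_apply, smul_eq_mul, mul_one]
      exact (key B hB i j).symm
    · rintro ⟨c, rfl⟩
      rw [Matrix.mul_smul, Matrix.smul_mul, hAJ, hJA]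
      simp
  · intro B hB hB0
    set S : F := ∑ q : Fin n, ∑ r : Fin n, B q r with hS
    have hconst : ∀ i j, B i j = S := key B hB
    have hS0 : S ≠ 0 := by
      intro h
      apply hB0
      ext i j
      rw [hconst i j, h]
      rfl
    have : (Finset.univ.filter fun q : Fin n × Fin n => B q.1 q.2 ≠ 0) = Finset.univ := by
      apply Finset.filter_true_of_mem
      intro q _
      rw [hconst q.1 q.2]
      exact hS0
    rw [this, Finset.card_univ]
    simp [sq]
end

section
/- If A ∈ Fⁿˣⁿ has rank 1, then the kernel of A contains a nonzero vector of Hamming weight at most 2; consequently, C(A,a) contains a nonzero matrix of Hamming weight at most 4, so the minimum distance of C(A,a) is at most 4. -/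
/-!
Any two columns of a matrix of rank at most one are linearly dependent, and a dependence
relation between columns `i ≠ j` is a kernel vector supported on `{i, j}`. Taking such a
vector `v` with `A v = 0` and `w` with `wᵀ A = 0`, the outer product `B = v wᵀ` satisfies
`A B = 0 = B A`, so `B` lies in `C(A, a)` for every `a`, and its support is contained in
`supp v × supp w`, of size at most `2 * 2`.
-/

open Finset Matrix

namespace Matrix

section

variable {F : Type*} [Field F] {m n : Type*} [Fintype m] [Fintype n]

theorem not_linearIndependent_col_pair_of_rank_le_one {A : Matrix m n F} (hA : A.rank ≤ 1)
    (i j : n) : ¬LinearIndependent F ![A.col i, A.col j] := by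
  intro hind
  have hsub : Set.range ![A.col i, A.col j] ⊆ Set.range A.col := by
    rintro _ ⟨k, rfl⟩
    fin_cases k <;> simp
  have : 2 ≤ A.rank :=
    calc 2 = (Set.range ![A.col i, A.col j]).finrank F := by
          simpa using linearIndependent_iff_card_eq_finrank_span.mp hind
      _ ≤ (Set.range A.col).finrank F := Set.finrank_mono hsub
      _ = A.rank := (rank_eq_finrank_span_cols A).symm
  omega

theorem exists_mulVec_eq_zero_support_subset_pair [DecidableEq n] [DecidableEq F]
    {A : Matrix m n F} (hA : A.rank ≤ 1) {i j : n} (hij : i ≠ j) :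
    ∃ v : n → F, v ≠ 0 ∧ A *ᵥ v = 0 ∧ (univ.filter fun k => v k ≠ 0) ⊆ {i, j} := by
  obtain ⟨s, t, hst, hne⟩ : ∃ s t : F, s • A.col i + t • A.col j = 0 ∧ ¬(s = 0 ∧ t = 0) := by
    simpa [LinearIndependent.pair_iff] using not_linearIndependent_col_pair_of_rank_le_one hA i j
  refine ⟨Pi.single i s + Pi.single j t, fun h => hne ⟨?_, ?_⟩, by simpa [mulVec_add] using hst,
    fun k hk => ?_⟩
  · simpa [hij.symm] using congrFun h i
  · simpa [hij] using congrFun h j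
  · by_contra hk'
    simp only [mem_insert, mem_singleton, not_or] at hk'
    simp [hk'.1, hk'.2] at hk

theorem exists_mulVec_eq_zero_card_support_le_two [DecidableEq n] [Nontrivial n]
    [DecidableEq F] {A : Matrix m n F} (hA : A.rank ≤ 1) :
    ∃ v : n → F, v ≠ 0 ∧ A *ᵥ v = 0 ∧ (univ.filter fun k => v k ≠ 0).card ≤ 2 := by
  obtain ⟨i, j, hij⟩ := exists_pair_ne n
  obtain ⟨v, hv, hAv, hsupp⟩ := exists_mulVec_eq_zero_support_subset_pair hA hij
  exact ⟨v, hv, hAv, (card_le_card hsupp).trans card_le_two⟩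

theorem card_support_vecMulVec_le [DecidableEq F] (v : m → F) (w : n → F) :
    (univ.filter fun q : m × n => vecMulVec v w q.1 q.2 ≠ 0).card ≤
      (univ.filter fun i => v i ≠ 0).card * (univ.filter fun j => w j ≠ 0).card := by
  rw [← card_product]
  refine card_le_card fun q hq => ?_
  rw [mem_filter, vecMulVec_apply] at hq
  simpa using ⟨left_ne_zero_of_mul hq.2, right_ne_zero_of_mul hq.2⟩

end

end Matrix

/-- If `A` has rank 1 (with `n ≥ 2`), then `Ker A` contains a nonzero vector of Hamming
weight at most 2, and consequently `C(A,a)` contains a nonzero matrix of Hamming weight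
at most 4, so the minimum distance of `C(A,a)` is at most 4. -/
theorem stmt_13 {F : Type*} [Field F] [DecidableEq F] {n : ℕ} (hn : 2 ≤ n)
    (A : Matrix (Fin n) (Fin n) F) (hA : A.rank = 1) (a : F) :
    (∃ v : Fin n → F, v ≠ 0 ∧ A.mulVec v = 0 ∧
      (Finset.univ.filter fun i => v i ≠ 0).card ≤ 2) ∧
    (∃ B : Matrix (Fin n) (Fin n) F, B ≠ 0 ∧ A * B = a • (B * A) ∧
      (Finset.univ.filter fun q : Fin n × Fin n => B q.1 q.2 ≠ 0).card ≤ 4) := by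
  have : Nontrivial (Fin n) := Fin.nontrivial_iff_two_le.mpr hn
  obtain ⟨v, hv, hAv, hv_card⟩ := exists_mulVec_eq_zero_card_support_le_two hA.le
  obtain ⟨w, hw, hAw, hw_card⟩ :=
    exists_mulVec_eq_zero_card_support_le_two (A := Aᵀ) (rank_transpose A ▸ hA.le)
  refine ⟨⟨v, hv, hAv, hv_card⟩, vecMulVec v w, by simp [hv, hw], ?_, ?_⟩
  · rw [mul_vecMulVec, vecMulVec_mul, ← mulVec_transpose, hAv, hAw]
    simp
  · exact (card_support_vecMulVec_le v w).trans (Nat.mul_le_mul hv_card hw_card)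
end

section
/- For q ≥ 3, n ≥ 2, and a ∉ {0,1}, the code C(Jₙ,a) contains no nonzero matrix of Hamming weight at most 2, i.e., its minimum distance is at least 3. -/
/-- Over `𝔽_q` with `q ≥ 3`, `n ≥ 2`, `a ≠ 0,1`: the code `C(Jₙ,a)` contains no nonzero
matrix of Hamming weight at most 2, i.e. its minimum distance is at least 3. -/
theorem stmt_15 {F : Type*} [Field F] [Fintype F] [DecidableEq F] {n : ℕ}
    (hq : 3 ≤ Fintype.card F) (hn : 2 ≤ n) (a : F) (ha0 : a ≠ 0) (ha1 : a ≠ 1) :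
    let J : Matrix (Fin n) (Fin n) F := Matrix.of fun _ _ => 1
    ∀ B : Matrix (Fin n) (Fin n) F, J * B = a • (B * J) → B ≠ 0 →
      3 ≤ (Finset.univ.filter fun q : Fin n × Fin n => B q.1 q.2 ≠ 0).card := by
  intro J B hJB hB0
  by_contra hlt
  push_neg at hlt
  set S := Finset.univ.filter fun q : Fin n × Fin n => B q.1 q.2 ≠ 0 with hSdef
  have hE : ∀ i j, (∑ k, B k j) = a * ∑ k, B i k := by
    intro i j
    have h := congrFun (congrFun hJB i) j
    simpa [J, Matrix.mul_apply, Matrix.smul_apply] using h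
  obtain ⟨i1, j1, hx⟩ : ∃ i j, B i j ≠ 0 := by
    by_contra h
    push_neg at h
    exact hB0 (by ext i j; simp [h])
  haveI : Nontrivial (Fin n) := Fin.nontrivial_iff_two_le.mpr hn
  have hmem : (i1, j1) ∈ S := by simp [S, hx]
  by_cases hrow : ∃ j, j ≠ j1 ∧ B i1 j ≠ 0
  · by_cases hcol : ∃ i, i ≠ i1 ∧ B i j1 ≠ 0
    · -- three distinct elements in S
      obtain ⟨j2, hj2, hx2⟩ := hrow
      obtain ⟨i2, hi2, hx3⟩ := hcol
      have hsub : ({(i1, j1), (i1, j2), (i2, j1)} : Finset (Fin n × Fin n)) ⊆ S := by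
        intro p hp
        simp only [Finset.mem_insert, Finset.mem_singleton] at hp
        rcases hp with rfl | rfl | rfl <;> simp [S, hx, hx2, hx3]
      have hcard : ({(i1, j1), (i1, j2), (i2, j1)} : Finset (Fin n × Fin n)).card = 3 := by
        rw [Finset.card_insert_of_notMem (by simp [Prod.ext_iff, hj2.symm, hi2.symm]),
          Finset.card_insert_of_notMem (by simp [Prod.ext_iff]; intro h; exact absurd h.symm hi2),
          Finset.card_singleton]
      have := Finset.card_le_card hsub
      omega
    · -- x alone in its column
      push_neg at hcol
      obtain ⟨j2, hj2, hx2⟩ := hrow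
      have hcsum : (∑ k, B k j1) = B i1 j1 := by
        apply Finset.sum_eq_single i1
        · intro b _ hb; exact hcol b hb
        · simp
      have hSeq : S = {(i1, j1), (i1, j2)} := by
        apply (Finset.eq_of_subset_of_card_le _ _).symm
        · intro p hp
          simp only [Finset.mem_insert, Finset.mem_singleton] at hp
          rcases hp with rfl | rfl <;> simp [S, hx, hx2]
        · have : ({(i1, j1), (i1, j2)} : Finset (Fin n × Fin n)).card = 2 := by
            rw [Finset.card_insert_of_notMem (by simp [Prod.ext_iff, hj2.symm]),
              Finset.card_singleton]
          omega
      obtain ⟨i2, hi2⟩ := exists_ne i1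
      have hrow2 : ∀ k, B i2 k = 0 := by
        intro k
        by_contra hk
        have : (i2, k) ∈ S := by simp [S, hk]
        rw [hSeq] at this
        simp only [Finset.mem_insert, Finset.mem_singleton, Prod.mk.injEq] at this
        rcases this with ⟨h, _⟩ | ⟨h, _⟩ <;> exact hi2 h
      have := hE i2 j1
      rw [hcsum] at this
      simp [hrow2] at this
      exact hx this
  · push_neg at hrow
    have hrsum : (∑ k, B i1 k) = B i1 j1 := by
      apply Finset.sum_eq_single j1
      · intro b _ hb; exact hrow b hb
      · simp
    by_cases hcol : ∃ i, i ≠ i1 ∧ B i j1 ≠ 0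
    · -- x alone in its row, but another entry in column j1
      obtain ⟨i2, hi2, hx3⟩ := hcol
      have hSeq : S = {(i1, j1), (i2, j1)} := by
        apply (Finset.eq_of_subset_of_card_le _ _).symm
        · intro p hp
          simp only [Finset.mem_insert, Finset.mem_singleton] at hp
          rcases hp with rfl | rfl <;> simp [S, hx, hx3]
        · have : ({(i1, j1), (i2, j1)} : Finset (Fin n × Fin n)).card = 2 := by
            rw [Finset.card_insert_of_notMem
              (by simp [Prod.ext_iff]; intro h; exact absurd h hi2.symm),
              Finset.card_singleton]
          omega
      obtain ⟨j2, hj2⟩ := exists_ne j1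
      have hcol2 : ∀ k, B k j2 = 0 := by
        intro k
        by_contra hk
        have : (k, j2) ∈ S := by simp [S, hk]
        rw [hSeq] at this
        simp only [Finset.mem_insert, Finset.mem_singleton, Prod.mk.injEq] at this
        rcases this with ⟨_, h⟩ | ⟨_, h⟩ <;> exact hj2 h
      have h2 := hE i1 j2
      rw [hrsum] at h2
      simp [hcol2] at h2
      rcases h2 with h2 | h2
      · exact ha0 h2
      · exact hx h2
    · -- x alone in row and column
      push_neg at hcol
      have hcsum : (∑ k, B k j1) = B i1 j1 := by
        apply Finset.sum_eq_single i1
        · intro b _ hb; exact hcol b hb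
        · simp
      have h2 := hE i1 j1
      rw [hcsum, hrsum] at h2
      have : a * B i1 j1 = 1 * B i1 j1 := by rw [one_mul, ← h2]
      exact ha1 (mul_right_cancel₀ hx this)
end
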